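/- arXiv:0807.4392 — 2 statements merged into one kernel-verified Lean document; each statement's English description precedes it below -/
import Mathlib

section
/- Let E be a symmetric Banach sequence space and α a bounded sequence. If Tα is the diagonal n-linear form Tα(x₁,…,xₙ) = ∑ₖ α(k)x₁(k)⋯xₙ(k) and Pα(x) = ∑ₖ α(k)x(k)^n the associated diagonal n-homogeneous polynomial, then the operator norm of Tα equals the polynomial norm of Pα: sup over ‖x₁‖,…,‖xₙ‖ ≤ 1 of |Tα(x₁,…,xₙ)| = sup over ‖x‖ ≤ 1 of |Pα(x)|. -/
/-- A symmetric Banach sequence space. -/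
structure SymmBSS where
  mem : (ℕ → ℂ) → Prop
  nrm : (ℕ → ℂ) → ℝ
  nrm_nonneg : ∀ x, 0 ≤ nrm x
  solid : ∀ x y : ℕ → ℂ, (∀ k, ‖x k‖ ≤ ‖y k‖) → mem y → mem x ∧ nrm x ≤ nrm y
  symm : ∀ (x : ℕ → ℂ) (e : ℕ ≃ ℕ), mem x → mem (x ∘ e) ∧ nrm (x ∘ e) = nrm x
  add_mem : ∀ x y : ℕ → ℂ, mem x → mem y → mem (x + y) ∧ nrm (x + y) ≤ nrm x + nrm y
  smul_mem : ∀ (c : ℂ) (x : ℕ → ℂ), mem x → mem (c • x) ∧ nrm (c • x) = ‖c‖ * nrm x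
  mem_of_l1 : ∀ x : ℕ → ℂ, Summable (fun k => ‖x k‖) → mem x
  bdd_of_mem : ∀ x : ℕ → ℂ, mem x → BddAbove (Set.range fun k => ‖x k‖)

/- In a finite-dimensional space a non-summable family is not absolutely summable either,
so both sides fall back to `0` together. -/
theorem norm_tsum_le_tsum_norm_of_finiteDimensional {ι V : Type*} [NormedAddCommGroup V]
    [NormedSpace ℝ V] [FiniteDimensional ℝ V] (f : ι → V) : ‖∑' i, f i‖ ≤ ∑' i, ‖f i‖ := by
  by_cases h : Summable fun i => ‖f i‖
  · exact norm_tsum_le_tsum_norm h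
  · rw [tsum_eq_zero_of_not_summable h,
      tsum_eq_zero_of_not_summable (mt summable_norm_iff.mpr h), norm_zero]

theorem Complex.exists_norm_eq_one_mul_pow_eq_norm {n : ℕ} (hn : 0 < n) (a : ℂ) :
    ∃ u : ℂ, ‖u‖ = 1 ∧ a * u ^ n = ‖a‖ := by
  rcases eq_or_ne a 0 with rfl | ha
  · exact ⟨1, norm_one, by simp⟩
  obtain ⟨u, hu⟩ := IsAlgClosed.exists_pow_nat_eq ((‖a‖ : ℂ) / a) hn
  have hnorm_pow : ‖u‖ ^ n = 1 := by
    rw [← norm_pow, hu, norm_div, Complex.norm_real, norm_norm, div_self (norm_ne_zero_iff.mpr ha)]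
  refine ⟨u, (pow_eq_one_iff_of_nonneg (norm_nonneg u) hn.ne').mp hnorm_pow, ?_⟩
  rw [hu, mul_div_cancel₀ _ ha]

namespace SymmBSS

variable (E : SymmBSS)

theorem mem_zero : E.mem 0 :=
  E.mem_of_l1 0 (by simp [summable_zero])

theorem nrm_zero : E.nrm 0 = 0 := by
  simpa using (E.smul_mem 0 0 E.mem_zero).2

theorem mem_and_nrm_eq_of_norm_eq {x y : ℕ → ℂ} (h : ∀ k, ‖x k‖ = ‖y k‖) (hy : E.mem y) :
    E.mem x ∧ E.nrm x = E.nrm y := by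
  obtain ⟨hx, hxy⟩ := E.solid x y (fun k => (h k).le) hy
  exact ⟨hx, hxy.antisymm (E.solid y x (fun k => (h k).ge) hx).2⟩

theorem norm_seq_mem {x : ℕ → ℂ} (hx : E.mem x) :
    E.mem (fun k => (‖x k‖ : ℂ)) ∧ E.nrm (fun k => (‖x k‖ : ℂ)) = E.nrm x :=
  E.mem_and_nrm_eq_of_norm_eq (fun k => by simp) hx

theorem sum_mem {ι : Type*} (s : Finset ι) {f : ι → ℕ → ℂ} (hf : ∀ i ∈ s, E.mem (f i)) :
    E.mem (∑ i ∈ s, f i) ∧ E.nrm (∑ i ∈ s, f i) ≤ ∑ i ∈ s, E.nrm (f i) := by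
  classical
  induction s using Finset.induction_on with
  | empty => simpa [E.nrm_zero] using E.mem_zero
  | insert a s ha ih =>
    obtain ⟨hs, hs_nrm⟩ := ih fun i hi => hf i (Finset.mem_insert_of_mem hi)
    obtain ⟨hmem, hnrm⟩ := E.add_mem _ _ (hf a (Finset.mem_insert_self a s)) hs
    rw [Finset.sum_insert ha, Finset.sum_insert ha]
    exact ⟨hmem, hnrm.trans (by linarith)⟩

/- The pointwise geometric mean is dominated by the pointwise arithmetic mean of the moduli
(AM–GM), which lies in `E` by the triangle inequality. -/
theorem geomMean_mem {n : ℕ} (hn : 0 < n) {x : Fin n → ℕ → ℂ} (hx : ∀ i, E.mem (x i)) :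
    E.mem (fun k => (((∏ i, ‖x i k‖) ^ (n : ℝ)⁻¹ : ℝ) : ℂ)) ∧
      E.nrm (fun k => (((∏ i, ‖x i k‖) ^ (n : ℝ)⁻¹ : ℝ) : ℂ)) ≤ (∑ i, E.nrm (x i)) / n := by
  have hn' : (0 : ℝ) < n := Nat.cast_pos.mpr hn
  set m : ℕ → ℂ := (n : ℂ)⁻¹ • ∑ i, fun k => (‖x i k‖ : ℂ)
  obtain ⟨hsum, hsum_nrm⟩ := E.sum_mem Finset.univ fun i _ => (E.norm_seq_mem (hx i)).1
  obtain ⟨hm, hm_nrm⟩ := E.smul_mem (n : ℂ)⁻¹ _ hsum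
  have hm_le : E.nrm m ≤ (∑ i, E.nrm (x i)) / n := by
    rw [hm_nrm, norm_inv, Complex.norm_natCast, inv_mul_eq_div]
    gcongr
    simpa only [(E.norm_seq_mem (hx _)).2] using hsum_nrm
  have hgm_le : ∀ k, ‖(((∏ i, ‖x i k‖) ^ (n : ℝ)⁻¹ : ℝ) : ℂ)‖ ≤ ‖m k‖ := by
    intro k
    have amgm := Real.geom_mean_le_arith_mean Finset.univ (fun _ => (1 : ℝ)) (fun i => ‖x i k‖)
      (fun _ _ => zero_le_one) (by simpa using hn) (fun i _ => norm_nonneg _)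
    simp only [Real.rpow_one, one_mul, Finset.sum_const, Finset.card_univ, Fintype.card_fin,
      nsmul_eq_mul, mul_one] at amgm
    have hm_k : m k = (((∑ i, ‖x i k‖) / n : ℝ) : ℂ) := by
      simp [m, Finset.sum_apply, div_eq_inv_mul]
    rw [hm_k, Complex.norm_real, Complex.norm_real, Real.norm_of_nonneg (by positivity),
      Real.norm_of_nonneg (by positivity)]
    exact amgm
  obtain ⟨hgm, hgm_nrm⟩ := E.solid _ m hgm_le hm
  exact ⟨hgm, hgm_nrm.trans hm_le⟩

/- Realigning the phases of the geometric mean against those of `α` makes every term of the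
polynomial equal to the modulus of the corresponding term of the multilinear form. -/
theorem exists_norm_tsum_pow_ge {n : ℕ} (hn : 0 < n) (α : ℕ → ℂ) {x : Fin n → ℕ → ℂ}
    (hx : ∀ i, E.mem (x i) ∧ E.nrm (x i) ≤ 1) :
    ∃ z : ℕ → ℂ, E.mem z ∧ E.nrm z ≤ 1 ∧
      ‖∑' k, α k * ∏ i, x i k‖ ≤ ‖∑' k, α k * z k ^ n‖ := by
  choose u hu_norm hu using fun k => Complex.exists_norm_eq_one_mul_pow_eq_norm hn (α k)
  set g : ℕ → ℝ := fun k => (∏ i, ‖x i k‖) ^ (n : ℝ)⁻¹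
  have hg_pow : ∀ k, g k ^ n = ∏ i, ‖x i k‖ := fun k =>
    Real.rpow_inv_natCast_pow (Finset.prod_nonneg fun i _ => norm_nonneg _) hn.ne'
  obtain ⟨hg, hg_nrm⟩ := E.geomMean_mem hn fun i => (hx i).1
  obtain ⟨hz, hz_nrm⟩ := E.mem_and_nrm_eq_of_norm_eq (x := fun k => u k * g k)
    (fun k => by simp [g, hu_norm]) hg
  have hterm : ∀ k, α k * (u k * g k) ^ n = ((‖α k * ∏ i, x i k‖ : ℝ) : ℂ) := by
    intro k
    rw [mul_pow, ← mul_assoc, hu, ← Complex.ofReal_pow, hg_pow, norm_mul, norm_prod,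
      Complex.ofReal_mul]
  refine ⟨_, hz, ?_, ?_⟩
  · rw [hz_nrm]
    calc _ ≤ (∑ i, E.nrm (x i)) / n := hg_nrm
      _ ≤ (∑ _i : Fin n, (1 : ℝ)) / n := by gcongr with i; exact (hx i).2
      _ = 1 := by simp [(Nat.cast_pos.mpr hn).ne']
  · rw [tsum_congr hterm, ← Complex.ofReal_tsum, Complex.norm_real,
      Real.norm_of_nonneg (tsum_nonneg fun _ => norm_nonneg _)]
    exact norm_tsum_le_tsum_norm_of_finiteDimensional _

end SymmBSS

theorem stmt9_general (E : SymmBSS) (n : ℕ) (hn : 0 < n) (α : ℕ → ℂ) :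
    sSup {t : ℝ | ∃ x : Fin n → ℕ → ℂ, (∀ i, E.mem (x i) ∧ E.nrm (x i) ≤ 1) ∧
        t = ‖∑' k, α k * ∏ i, x i k‖}
      = sSup {t : ℝ | ∃ x : ℕ → ℂ, E.mem x ∧ E.nrm x ≤ 1 ∧
        t = ‖∑' k, α k * x k ^ n‖} := by
  refine csSup_eq_csSup_of_forall_exists_le ?_ ?_
  · rintro _ ⟨x, hx, rfl⟩
    obtain ⟨z, hz, hz_nrm, hle⟩ := E.exists_norm_tsum_pow_ge hn α hx
    exact ⟨_, ⟨z, hz, hz_nrm, rfl⟩, hle⟩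
  · rintro _ ⟨x, hx, hx_nrm, rfl⟩
    exact ⟨_, ⟨fun _ => x, fun _ => ⟨hx, hx_nrm⟩, rfl⟩, by simp⟩

/-- For a diagonal form on a symmetric Banach sequence space, the norm of the `n`-linear form
`T_α` equals the norm of the associated diagonal `n`-homogeneous polynomial `P_α`:
`sup_{‖x₁‖,…,‖xₙ‖ ≤ 1} |T_α(x₁,…,xₙ)| = sup_{‖x‖ ≤ 1} |P_α(x)|`. -/
theorem stmt9 (E : SymmBSS) (n : ℕ) (hn : 0 < n) (α : ℕ → ℂ)
    (hα : BddAbove (Set.range fun k => ‖α k‖))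
    (hsum : ∀ x : Fin n → ℕ → ℂ, (∀ i, E.mem (x i)) →
      Summable fun k => ‖α k‖ * ∏ i, ‖x i k‖) :
    sSup {t : ℝ | ∃ x : Fin n → ℕ → ℂ, (∀ i, E.mem (x i) ∧ E.nrm (x i) ≤ 1) ∧
        t = ‖∑' k, α k * ∏ i, x i k‖}
      = sSup {t : ℝ | ∃ x : ℕ → ℂ, E.mem x ∧ E.nrm x ≤ 1 ∧
        t = ‖∑' k, α k * x k ^ n‖} :=
  stmt9_general E n hn α
end

section
/- Let 1 < p < n' (conjugate exponent of n ≥ 2), w a decreasing positive sequence, and α a nonnegative decreasing sequence. For the diagonal operator D'_σ : ℓ^{n'} → d(w,p) adjoint to D_σ with σ = α^{1/n}: ‖D'_σ‖ = ( ∑ₖ α(k)^{p'/(p'−n)} w(k)^{n'/(n'−p)} )^{(p'−n)/(p'n)}, i.e., the supremum over ‖x‖_{ℓ^{n'}} ≤ 1 of ‖(α(k)^{1/n}x(k))ₖ‖_{d(w,p)} equals ‖α‖_{d(w^{n'/(n'−p)}, p'/(p'−n))}^{1/n}. -/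
/-!
Put `σ = α ^ (1 / n)`, `r = n'` and let `q = r / (r - p)` be the conjugate exponent of `r / p`;
the claimed value is `S ^ (1 / (p q))` with `S = ∑ σ(k) ^ (p q) w(k) ^ q`.

Upper bound: for `τ > 1`, the first `N` values of the decreasing rearrangement of `σ x` are at
most `τ` times `|σ x|` at `N` distinct, greedily chosen indices `j 0, …, j (N - 1)`. Hölder's
inequality with exponents `r / p` and `q` bounds `∑ |x (j k)| ^ p σ (j k) ^ p w k` by
`‖x‖_r ^ p (∑ σ (j k) ^ (p q) w k ^ q) ^ (1 / q)`, and since `σ` and `w` both decrease, the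
rearrangement inequality lets us replace `σ (j k)` by `σ k`.

Lower bound: the vector `x k ∝ σ k ^ (p q / r) w k ^ (q / r)` is decreasing, hence its own
rearrangement, and it is the equality case of Hölder's inequality.
-/

/-- The decreasing rearrangement (0-indexed). -/
noncomputable def dRear (x : ℕ → ℂ) (k : ℕ) : ℝ :=
  sInf {s : ℝ | ∃ J : Finset ℕ, J.card ≤ k ∧ ∀ j ∉ J, ‖x j‖ ≤ s}

/-- The Lorentz norm `‖x‖_{d(w,p)} = (∑ₖ x*(k)^p w(k))^{1/p}`. -/
noncomputable def lorentzNrm (w : ℕ → ℝ) (p : ℝ) (x : ℕ → ℂ) : ℝ :=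
  (∑' k, dRear x k ^ p * w k) ^ (1 / p)

open Finset Filter Topology

section DecreasingRearrangement

variable {x : ℕ → ℂ} {k : ℕ}

lemma nonneg_of_mem_dRear_set {s : ℝ}
    (hs : s ∈ {s : ℝ | ∃ J : Finset ℕ, J.card ≤ k ∧ ∀ j ∉ J, ‖x j‖ ≤ s}) : 0 ≤ s := by
  obtain ⟨J, -, hJ⟩ := hs
  obtain ⟨j, hj⟩ := Infinite.exists_notMem_finset J
  exact (norm_nonneg _).trans (hJ j hj)

lemma dRear_nonneg (x : ℕ → ℂ) (k : ℕ) : 0 ≤ dRear x k :=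
  Real.sInf_nonneg fun _ ↦ nonneg_of_mem_dRear_set

lemma dRear_le {s : ℝ} (J : Finset ℕ) (hJ : J.card ≤ k) (h : ∀ j ∉ J, ‖x j‖ ≤ s) :
    dRear x k ≤ s :=
  csInf_le ⟨0, fun _ ↦ nonneg_of_mem_dRear_set⟩ ⟨J, hJ, h⟩

lemma dRear_eq_of_antitone {r : ℕ → ℝ} (hr : Antitone r) (hx : ∀ k, ‖x k‖ = r k) (k : ℕ) :
    dRear x k = r k := by
  have hle : ∀ j ∉ range k, ‖x j‖ ≤ r k := fun j hj ↦ hx j ▸ hr (by simpa using hj)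
  refine le_antisymm (dRear_le _ (card_range k).le hle) (le_csInf ⟨r k, _, by simp, hle⟩ ?_)
  rintro s ⟨J, hJ, h⟩
  -- pigeonhole: some `j ≤ k` lies outside `J`, and `r k ≤ ‖x j‖`
  obtain ⟨j, hj, hjJ⟩ : ∃ j ∈ range (k + 1), j ∉ J :=
    not_subset.mp fun hsub ↦ by simpa using (card_le_card hsub).trans hJ
  exact (hr (Nat.lt_succ_iff.mp (mem_range.mp hj))).trans ((hx j).symm.le.trans (h j hjJ))

lemma exists_notMem_dRear_le_mul {τ : ℝ} (hτ : 1 < τ) (J : Finset ℕ) (hJ : J.card ≤ k) :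
    ∃ m ∉ J, dRear x k ≤ τ * ‖x m‖ := by
  by_contra! h
  have hpos : 0 < dRear x k := by
    obtain ⟨m, hm⟩ := Infinite.exists_notMem_finset J
    exact lt_of_le_of_lt (by positivity) (h m hm)
  have : dRear x k ≤ dRear x k / τ :=
    dRear_le J hJ fun m hm ↦ (le_div_iff₀' (by linarith)).mpr (h m hm).le
  rw [le_div_iff₀ (by linarith)] at this
  nlinarith

lemma exists_injOn_dRear_le_mul {τ : ℝ} (hτ : 1 < τ) (x : ℕ → ℂ) (N : ℕ) :
    ∃ j : ℕ → ℕ, Set.InjOn j (Set.Iio N) ∧ ∀ k < N, dRear x k ≤ τ * ‖x (j k)‖ := by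
  induction N with
  | zero => exact ⟨id, Set.injOn_id _, by simp⟩
  | succ N ih =>
    obtain ⟨j, hjinj, hj⟩ := ih
    obtain ⟨m, hm, hxm⟩ := exists_notMem_dRear_le_mul (x := x) hτ ((range N).image j)
      (card_image_le.trans (card_range N).le)
    have hEq : Set.EqOn j (Function.update j N m) (Set.Iio N) :=
      fun k hk ↦ (Function.update_of_ne (ne_of_lt hk) _ _).symm
    refine ⟨Function.update j N m, ?_, fun k hk ↦ ?_⟩
    · rw [Set.Iio_add_one_eq_Iic, ← Set.Iio_insert, Set.injOn_insert Set.self_notMem_Iio,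
        ← hEq.image_eq, Function.update_self]
      exact ⟨hjinj.congr hEq, by simpa using hm⟩
    · rcases (Nat.lt_succ_iff.mp hk).lt_or_eq with hk | rfl
      · rw [← hEq hk]; exact hj k hk
      · rwa [Function.update_self]

end DecreasingRearrangement

lemma Finset.sum_le_sum_range_card_of_antitone {a : ℕ → ℝ} (ha : Antitone a) (F : Finset ℕ) :
    ∑ i ∈ F, a i ≤ ∑ k ∈ range F.card, a k := by
  induction F using Finset.induction_on_max with
  | empty => simp
  | insert m F hlt ih =>
    have hm : m ∉ F := fun h ↦ lt_irrefl m (hlt m h)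
    have hcard : F.card ≤ m := by
      simpa using card_le_card fun i hi ↦ mem_range.mpr (hlt i hi)
    rw [sum_insert hm, card_insert_of_notMem hm, sum_range_succ, add_comm]
    exact add_le_add ih (ha hcard)

lemma sum_comp_mul_le_sum_mul_of_antitone {a v : ℕ → ℝ} (ha : Antitone a) (hv : Antitone v)
    {N : ℕ} (hvN : 0 ≤ v N) {j : ℕ → ℕ} (hj : Set.InjOn j (Set.Iio N)) :
    ∑ k ∈ range N, a (j k) * v k ≤ ∑ k ∈ range N, a k * v k := by
  induction N generalizing v with
  | zero => simp
  | succ N ih =>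
    -- split `v = (v - v N) + v N`; the first part vanishes at `N`, the second is constant
    have hsplit : ∀ b : ℕ → ℝ, ∑ k ∈ range (N + 1), b k * v k
        = ∑ k ∈ range N, b k * (v k - v N) + v N * ∑ k ∈ range (N + 1), b k := by
      intro b
      simp only [sum_range_succ, mul_sub, sum_sub_distrib, ← sum_mul]
      ring
    have hshift := ih (v := fun k ↦ v k - v N) (fun _ _ h ↦ sub_le_sub_right (hv h) _)
      (by simp) (hj.mono (Set.Iio_subset_Iio N.le_succ))
    have hsum : ∑ k ∈ range (N + 1), a (j k) ≤ ∑ k ∈ range (N + 1), a k := by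
      have hinj : Set.InjOn j (range (N + 1)) := by simpa using hj
      simpa [sum_image hinj, card_image_of_injOn hinj] using
        Finset.sum_le_sum_range_card_of_antitone ha ((range (N + 1)).image j)
    rw [hsplit, hsplit]
    exact add_le_add hshift (mul_le_mul_of_nonneg_left hsum (hvN.trans (hv N.le_succ)))

section Exponents

variable {p r q : ℝ}

lemma holderConjugate_div_div_sub (hp : 0 < p) (hpr : p < r) :
    (r / p).HolderConjugate (r / (r - p)) := by
  refine Real.holderConjugate_iff.mpr ⟨(one_lt_div hp).mpr hpr, ?_⟩
  rw [inv_div, inv_div, ← add_div, add_sub_cancel, div_self (by linarith)]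

lemma Real.HolderConjugate.pos_of_div (hp : 0 < p) (hpq : (r / p).HolderConjugate q) : 0 < r := by
  simpa [div_mul_cancel₀ _ hp.ne'] using mul_pos hpq.pos hp

lemma Real.HolderConjugate.one_sub_div (hpq : (r / p).HolderConjugate q) : 1 - p / r = 1 / q := by
  have h := hpq.inv_add_inv_eq_one
  rw [inv_div] at h
  rw [one_div]
  linarith

lemma Real.HolderConjugate.mul_rpow_div (hp : 0 < p) (hpq : (r / p).HolderConjugate q) {t : ℝ}
    (ht : 0 ≤ t) : t * t ^ (p * q / r) = t ^ q := by
  have hr := hpq.pos_of_div hp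
  have hq := hpq.symm.pos
  have hexp : p * q / r + 1 = q := by
    have := hpq.one_sub_div
    field_simp at this ⊢
    linarith
  conv_rhs => rw [← hexp]
  rw [Real.rpow_add' ht (hexp.symm ▸ hq.ne'), Real.rpow_one, mul_comm]

end Exponents

section DiagonalOperator

variable {w σ : ℕ → ℝ} {p r q : ℝ}

lemma sum_rpow_mul_le_of_injOn (hw0 : ∀ k, 0 ≤ w k) (hw : Antitone w) (hσ0 : ∀ k, 0 ≤ σ k)
    (hσ : Antitone σ) (hp : 0 < p) (hpq : (r / p).HolderConjugate q)
    (hS : Summable fun k ↦ σ k ^ (p * q) * w k ^ q) {x : ℕ → ℂ}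
    (hx : Summable fun k ↦ ‖x k‖ ^ r) (hx1 : ∑' k, ‖x k‖ ^ r ≤ 1)
    {N : ℕ} {j : ℕ → ℕ} (hj : Set.InjOn j (Set.Iio N)) :
    ∑ k ∈ range N, ‖x (j k)‖ ^ p * (σ (j k) ^ p * w k)
      ≤ (∑' k, σ k ^ (p * q) * w k ^ q) ^ (1 / q) := by
  have hinj : Set.InjOn j (range N) := by simpa using hj
  have hxpart : ∑ k ∈ range N, (‖x (j k)‖ ^ p) ^ (r / p) ≤ 1 := by
    have hpow : ∀ k, (‖x (j k)‖ ^ p) ^ (r / p) = ‖x (j k)‖ ^ r := fun k ↦ by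
      rw [← Real.rpow_mul (norm_nonneg _), mul_div_cancel₀ _ hp.ne']
    simp only [hpow]
    rw [← sum_image (f := fun i ↦ ‖x i‖ ^ r) hinj]
    exact (hx.sum_le_tsum _ fun _ _ ↦ by positivity).trans hx1
  have hσpart : ∑ k ∈ range N, (σ (j k) ^ p * w k) ^ q ≤ ∑' k, σ k ^ (p * q) * w k ^ q := by
    have hpow : ∀ i k, (σ i ^ p * w k) ^ q = σ i ^ (p * q) * w k ^ q := fun i k ↦ by
      rw [Real.mul_rpow (by positivity [hσ0 i]) (hw0 k), ← Real.rpow_mul (hσ0 i)]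
    simp only [hpow]
    calc ∑ k ∈ range N, σ (j k) ^ (p * q) * w k ^ q
        ≤ ∑ k ∈ range N, σ k ^ (p * q) * w k ^ q :=
          sum_comp_mul_le_sum_mul_of_antitone
            (fun _ _ h ↦ Real.rpow_le_rpow (hσ0 _) (hσ h) (by positivity [hpq.pos, hpq.symm.pos]))
            (fun _ _ h ↦ Real.rpow_le_rpow (hw0 _) (hw h) hpq.symm.nonneg)
            (by positivity [hw0 N]) hj
      _ ≤ _ := hS.sum_le_tsum _ fun k _ ↦ by positivity [hσ0 k, hw0 k]
  calc ∑ k ∈ range N, ‖x (j k)‖ ^ p * (σ (j k) ^ p * w k)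
      ≤ (∑ k ∈ range N, (‖x (j k)‖ ^ p) ^ (r / p)) ^ (1 / (r / p))
        * (∑ k ∈ range N, (σ (j k) ^ p * w k) ^ q) ^ (1 / q) :=
        Real.inner_le_Lp_mul_Lq_of_nonneg _ hpq (fun _ _ ↦ by positivity)
          (fun k _ ↦ by positivity [hσ0 (j k), hw0 k])
    _ ≤ 1 * (∑' k, σ k ^ (p * q) * w k ^ q) ^ (1 / q) := by
        have hσnonneg : 0 ≤ ∑ k ∈ range N, (σ (j k) ^ p * w k) ^ q :=
          sum_nonneg fun k _ ↦ by positivity [hσ0 (j k), hw0 k]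
        exact mul_le_mul
          (Real.rpow_le_one (sum_nonneg fun _ _ ↦ by positivity) hxpart (by positivity [hpq.pos]))
          (Real.rpow_le_rpow hσnonneg hσpart hpq.symm.one_div_nonneg) (by positivity) zero_le_one
    _ = _ := one_mul _

lemma sum_range_dRear_rpow_mul_le (hw0 : ∀ k, 0 ≤ w k) (hw : Antitone w) (hσ0 : ∀ k, 0 ≤ σ k)
    (hσ : Antitone σ) (hp : 0 < p) (hpq : (r / p).HolderConjugate q)
    (hS : Summable fun k ↦ σ k ^ (p * q) * w k ^ q) {x : ℕ → ℂ}
    (hx : Summable fun k ↦ ‖x k‖ ^ r) (hx1 : ∑' k, ‖x k‖ ^ r ≤ 1) {τ : ℝ} (hτ : 1 < τ)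
    (N : ℕ) :
    ∑ k ∈ range N, dRear (fun k ↦ (σ k : ℂ) * x k) k ^ p * w k
      ≤ τ ^ p * (∑' k, σ k ^ (p * q) * w k ^ q) ^ (1 / q) := by
  obtain ⟨j, hj, hjle⟩ := exists_injOn_dRear_le_mul hτ (fun k ↦ (σ k : ℂ) * x k) N
  have hterm : ∀ k ∈ range N, dRear (fun k ↦ (σ k : ℂ) * x k) k ^ p * w k
      ≤ τ ^ p * (‖x (j k)‖ ^ p * (σ (j k) ^ p * w k)) := fun k hk ↦ by
    have hnorm : ‖(σ (j k) : ℂ) * x (j k)‖ = σ (j k) * ‖x (j k)‖ := by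
      rw [norm_mul, Complex.norm_real, Real.norm_of_nonneg (hσ0 _)]
    calc dRear (fun k ↦ (σ k : ℂ) * x k) k ^ p * w k
        ≤ (τ * (σ (j k) * ‖x (j k)‖)) ^ p * w k := by
          gcongr
          · exact hw0 k
          · exact dRear_nonneg _ _
          · exact hnorm ▸ hjle k (mem_range.mp hk)
      _ = τ ^ p * (‖x (j k)‖ ^ p * (σ (j k) ^ p * w k)) := by
          rw [Real.mul_rpow (by linarith) (by positivity [hσ0 (j k)]),
            Real.mul_rpow (hσ0 _) (norm_nonneg _)]
          ring
  calc _ ≤ ∑ k ∈ range N, τ ^ p * (‖x (j k)‖ ^ p * (σ (j k) ^ p * w k)) := sum_le_sum hterm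
    _ = τ ^ p * ∑ k ∈ range N, ‖x (j k)‖ ^ p * (σ (j k) ^ p * w k) := (mul_sum ..).symm
    _ ≤ _ := mul_le_mul_of_nonneg_left
        (sum_rpow_mul_le_of_injOn hw0 hw hσ0 hσ hp hpq hS hx hx1 hj) (by positivity)

lemma lorentzNrm_mul_le (hw0 : ∀ k, 0 ≤ w k) (hw : Antitone w) (hσ0 : ∀ k, 0 ≤ σ k)
    (hσ : Antitone σ) (hp : 0 < p) (hpq : (r / p).HolderConjugate q)
    (hS : Summable fun k ↦ σ k ^ (p * q) * w k ^ q) {x : ℕ → ℂ}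
    (hx : Summable fun k ↦ ‖x k‖ ^ r) (hx1 : ∑' k, ‖x k‖ ^ r ≤ 1) :
    lorentzNrm w p (fun k ↦ (σ k : ℂ) * x k)
      ≤ (∑' k, σ k ^ (p * q) * w k ^ q) ^ (1 / (p * q)) := by
  set C := (∑' k, σ k ^ (p * q) * w k ^ q) ^ (1 / q)
  have hlim : Tendsto (fun τ : ℝ ↦ τ ^ p * C) (𝓝[>] 1) (𝓝 C) := by
    simpa using ((Real.continuousAt_rpow_const 1 p (Or.inl one_ne_zero)).tendsto.mono_left
      nhdsWithin_le_nhds).mul_const C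
  have hsum : ∑' k, dRear (fun k ↦ (σ k : ℂ) * x k) k ^ p * w k ≤ C :=
    Real.tsum_le_of_sum_range_le
      (fun k ↦ by positivity [dRear_nonneg (fun k ↦ (σ k : ℂ) * x k) k, hw0 k])
      fun N ↦ ge_of_tendsto hlim (eventually_nhdsWithin_of_forall fun τ hτ ↦
        sum_range_dRear_rpow_mul_le hw0 hw hσ0 hσ hp hpq hS hx hx1 hτ N)
  calc lorentzNrm w p (fun k ↦ (σ k : ℂ) * x k) ≤ C ^ (1 / p) :=
        Real.rpow_le_rpow (tsum_nonneg fun k ↦ by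
          positivity [dRear_nonneg (fun k ↦ (σ k : ℂ) * x k) k, hw0 k]) hsum (by positivity)
    _ = _ := by
        rw [← Real.rpow_mul (tsum_nonneg fun k ↦ by positivity [hσ0 k, hw0 k])]
        congr 1
        field_simp

lemma lorentzNrm_eq_of_antitone {y : ℕ → ℂ} (hy : Antitone fun k ↦ ‖y k‖) :
    lorentzNrm w p y = (∑' k, ‖y k‖ ^ p * w k) ^ (1 / p) := by
  simp only [lorentzNrm, dRear_eq_of_antitone hy (fun _ ↦ rfl)]

lemma exists_lorentzNrm_mul_eq (hw0 : ∀ k, 0 ≤ w k) (hw : Antitone w) (hσ0 : ∀ k, 0 ≤ σ k)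
    (hσ : Antitone σ) (hp : 0 < p) (hpq : (r / p).HolderConjugate q)
    (hS : Summable fun k ↦ σ k ^ (p * q) * w k ^ q) :
    ∃ x : ℕ → ℂ, (Summable fun k ↦ ‖x k‖ ^ r) ∧ (∑' k, ‖x k‖ ^ r) ^ (1 / r) ≤ 1 ∧
      lorentzNrm w p (fun k ↦ (σ k : ℂ) * x k)
        = (∑' k, σ k ^ (p * q) * w k ^ q) ^ (1 / (p * q)) := by
  set S := ∑' k, σ k ^ (p * q) * w k ^ q
  have hS0 : 0 ≤ S := tsum_nonneg fun k ↦ by positivity [hσ0 k, hw0 k]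
  have hq : 0 < q := hpq.symm.pos
  have hr : 0 < r := hpq.pos_of_div hp
  -- equality in Hölder: `x k ^ r ∝ (σ k ^ p w k) ^ q`; if `S = 0` this is the zero vector
  set x : ℕ → ℝ := fun k ↦ σ k ^ (p * q / r) * w k ^ (q / r) / S ^ (1 / r)
  have hx0 : ∀ k, 0 ≤ x k := fun k ↦ by positivity [hσ0 k, hw0 k]
  have hxr : ∀ k, ‖(x k : ℂ)‖ ^ r = σ k ^ (p * q) * w k ^ q / S := fun k ↦ by
    rw [Complex.norm_real, Real.norm_of_nonneg (hx0 k), Real.div_rpow (by positivity [hσ0 k, hw0 k])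
      (by positivity), Real.mul_rpow (by positivity [hσ0 k]) (by positivity [hw0 k]),
      ← Real.rpow_mul (hσ0 k), ← Real.rpow_mul (hw0 k), ← Real.rpow_mul hS0]
    field_simp
    rw [Real.rpow_one]
  have hσx : ∀ k, ‖(σ k : ℂ) * (x k : ℂ)‖ = σ k ^ q * w k ^ (q / r) / S ^ (1 / r) := fun k ↦ by
    rw [norm_mul, Complex.norm_real, Complex.norm_real, Real.norm_of_nonneg (hσ0 k),
      Real.norm_of_nonneg (hx0 k), ← hpq.mul_rpow_div hp (hσ0 k)]
    ring
  have hanti : Antitone fun k ↦ ‖(σ k : ℂ) * (x k : ℂ)‖ := fun i j hij ↦ by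
    have := hσ0 i; have := hσ0 j; have := hw0 j; have := hσ hij; have := hw hij
    simp only [hσx]
    gcongr
  have hterm : ∀ k, ‖(σ k : ℂ) * (x k : ℂ)‖ ^ p * w k = σ k ^ (p * q) * w k ^ q / S ^ (p / r) :=
    fun k ↦ by
    rw [hσx, Real.div_rpow (by positivity [hσ0 k, hw0 k]) (by positivity),
      Real.mul_rpow (by positivity [hσ0 k]) (by positivity [hw0 k]), ← Real.rpow_mul (hσ0 k),
      ← Real.rpow_mul (hw0 k), ← Real.rpow_mul hS0, mul_div_assoc, mul_assoc, mul_comm _ (w k),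
      ← mul_div_assoc, show q / r * p = p * q / r by ring, hpq.mul_rpow_div hp (hw0 k)]
    ring_nf
  refine ⟨fun k ↦ (x k : ℂ), ?_, ?_, ?_⟩
  · simpa only [hxr] using hS.div_const S
  · simp only [hxr, tsum_div_const]
    exact Real.rpow_le_one (by positivity) (div_self_le_one S) (by positivity)
  · rw [lorentzNrm_eq_of_antitone hanti]
    simp only [hterm, tsum_div_const]
    have hquot : S / S ^ (p / r) = S ^ (1 / q) := by
      rw [← hpq.one_sub_div, Real.rpow_sub' hS0 (by rw [hpq.one_sub_div]; positivity),
        Real.rpow_one]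
    rw [hquot, ← Real.rpow_mul hS0]
    congr 1
    field_simp

theorem isGreatest_lorentzNrm_mul (hw0 : ∀ k, 0 ≤ w k) (hw : Antitone w) (hσ0 : ∀ k, 0 ≤ σ k)
    (hσ : Antitone σ) (hp : 0 < p) (hpq : (r / p).HolderConjugate q)
    (hS : Summable fun k ↦ σ k ^ (p * q) * w k ^ q) :
    IsGreatest {t : ℝ | ∃ x : ℕ → ℂ, (Summable fun k ↦ ‖x k‖ ^ r) ∧
        (∑' k, ‖x k‖ ^ r) ^ (1 / r) ≤ 1 ∧ t = lorentzNrm w p (fun k ↦ (σ k : ℂ) * x k)}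
      ((∑' k, σ k ^ (p * q) * w k ^ q) ^ (1 / (p * q))) := by
  refine ⟨?_, ?_⟩
  · obtain ⟨x, hx, hx1, heq⟩ := exists_lorentzNrm_mul_eq hw0 hw hσ0 hσ hp hpq hS
    exact ⟨x, hx, hx1, heq.symm⟩
  · rintro t ⟨x, hx, hx1, rfl⟩
    rw [one_div, Real.rpow_inv_le_iff_of_pos (tsum_nonneg fun _ ↦ by positivity) zero_le_one
      (hpq.pos_of_div hp),
      Real.one_rpow] at hx1
    exact lorentzNrm_mul_le hw0 hw hσ0 hσ hp hpq hS hx hx1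

end DiagonalOperator

/-- Norm of the diagonal operator `D'_σ : ℓ^{n'} → d(w,p)` with `σ = α^{1/n}` (α nonnegative
decreasing), for `1 < p < n'`:
`sup_{‖x‖_{ℓ^{n'}} ≤ 1} ‖(α(k)^{1/n} x(k))ₖ‖_{d(w,p)}
  = (∑ₖ α(k)^{p'/(p'-n)} w(k)^{n'/(n'-p)})^{(p'-n)/(p'n)}`. -/
theorem stmt18 (w : ℕ → ℝ) (hw : ∀ k, 0 < w k) (hwa : Antitone w)
    (p : ℝ) (hp : 1 < p) (n : ℕ) (hn : 2 ≤ n)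
    (n' p' : ℝ) (hn' : n' = (n : ℝ) / ((n : ℝ) - 1)) (hp' : p' = p / (p - 1))
    (hpn : p < n')
    (α : ℕ → ℝ) (hαa : Antitone α) (hα0 : ∀ k, 0 ≤ α k)
    (hαsum : Summable fun k => α k ^ (p' / (p' - n)) * w k ^ (n' / (n' - p))) :
    sSup {t : ℝ | ∃ x : ℕ → ℂ, (Summable fun k => ‖x k‖ ^ n') ∧
        (∑' k, ‖x k‖ ^ n') ^ (1 / n') ≤ 1 ∧
        t = lorentzNrm w p (fun k => Complex.ofReal (α k ^ (1 / (n : ℝ))) * x k)}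
      = (∑' k, α k ^ (p' / (p' - n)) * w k ^ (n' / (n' - p))) ^ ((p' - n) / (p' * n)) := by
  have hn1 : (1 : ℝ) < n := by exact_mod_cast hn
  have hexp : 1 / (n : ℝ) * (p * (n' / (n' - p))) = p' / (p' - n) ∧
      1 / (p * (n' / (n' - p))) = (p' - n) / (p' * n) := by
    have hpn' : n' - p ≠ 0 := by linarith
    subst hn' hp'
    have hn1' : (n : ℝ) - 1 ≠ 0 := by linarith
    have hp1 : p - 1 ≠ 0 := by linarith
    constructor <;> field_simp <;> ring
  have hσpow : ∀ k, (α k ^ (1 / (n : ℝ))) ^ (p * (n' / (n' - p))) = α k ^ (p' / (p' - n)) :=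
    fun k ↦ by rw [← Real.rpow_mul (hα0 k), hexp.1]
  have hmax := (isGreatest_lorentzNrm_mul (σ := fun k ↦ α k ^ (1 / (n : ℝ)))
    (fun k ↦ (hw k).le) hwa (fun k ↦ Real.rpow_nonneg (hα0 k) _)
    (fun _ _ h ↦ Real.rpow_le_rpow (hα0 _) (hαa h) (by positivity)) (by linarith)
    (holderConjugate_div_div_sub (by linarith) hpn) (by simpa only [hσpow] using hαsum)).csSup_eq
  simpa only [hσpow, hexp.2] using hmax
end
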